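/- arXiv:2302.11368 — 3 statements merged into one kernel-verified Lean document; each statement's English description precedes it below -/
import Mathlib

section
/- Let G be a finite minimal non-solvable group and let φ : G → H be a surjective group homomorphism onto a non-trivial group H. Then H is minimal non-solvable. -/
/-! Every proper subgroup of `G` is solvable; this applies to `ker φ` (proper as `H` is
nontrivial) and to the preimage of each proper subgroup `K` of `H`. A solvable `H` would make
`G`, an extension of `ker φ` by `H`, solvable; and `K` is a quotient of its solvable preimage. -/

namespace MonoidHom

variable {G H : Type*} [Group G] [Group H] {φ : G →* H}

theorem ker_ne_top_of_surjective [Nontrivial H] (hφ : Function.Surjective φ) : φ.ker ≠ ⊤ := by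
  rw [Ne, ker_eq_top_iff]
  rintro rfl
  obtain ⟨x, hx⟩ := exists_ne (1 : H)
  obtain ⟨g, rfl⟩ := hφ x
  exact hx rfl

theorem comap_ne_top_of_surjective (hφ : Function.Surjective φ) {K : Subgroup H} (hK : K ≠ ⊤) :
    K.comap φ ≠ ⊤ := by
  rw [← Subgroup.comap_top φ]
  exact (Subgroup.comap_injective hφ).ne hK

end MonoidHom

theorem mns_quotient_general (G H : Type*) [Group G] [Group H]
    (hns : ¬ IsSolvable G)
    (hmin : ∀ K : Subgroup G, K ≠ ⊤ → IsSolvable K)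
    (φ : G →* H) (hφ : Function.Surjective φ) (hH : Nontrivial H) :
    ¬ IsSolvable H ∧ ∀ K : Subgroup H, K ≠ ⊤ → IsSolvable K := by
  refine ⟨fun (_ : Group.IsSolvable H) => ?_, fun K hK => ?_⟩
  · have : Group.IsSolvable φ.ker := hmin _ (φ.ker_ne_top_of_surjective hφ)
    exact hns (Group.isSolvable_of_ker_le_range φ.ker.subtype φ (Subgroup.range_subtype _).ge)
  · have : Group.IsSolvable (K.comap φ) := hmin _ (φ.comap_ne_top_of_surjective hφ hK)
    exact Group.isSolvable_of_surjective (φ.subgroupComap_surjective_of_surjective K hφ)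

theorem mns_quotient (G H : Type*) [Group G] [Finite G] [Group H]
    (hns : ¬ IsSolvable G)
    (hmin : ∀ K : Subgroup G, K ≠ ⊤ → IsSolvable K)
    (φ : G →* H) (hφ : Function.Surjective φ) (hH : Nontrivial H) :
    ¬ IsSolvable H ∧ ∀ K : Subgroup H, K ≠ ⊤ → IsSolvable K :=
  mns_quotient_general G H hns hmin φ hφ hH
end

section
/- Every finite subgroup of GL(3,ℤ) is solvable. -/
/-!
Minkowski's argument. If an integer matrix `A` of prime order `q` satisfies `A ≡ 1 (mod p)` with
`(p, q) ≠ (2, 2)`, expanding `(1 + p ^ k B) ^ q = 1` shows `A ≡ 1 (mod p ^ (k + 1))`, so `A = 1`.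
Hence a finite subgroup `H` of `GL₃(ℤ)` embeds into `GL₃(𝔽₃)`, of order `11232 = 2⁵·3³·13`, and its
Sylow `r`-subgroups for odd `r` embed into `GL₃(𝔽₂)`, of order `168 = 2³·3·7`. Thus `|H|` divides
`96 = 2⁵·3`. A group of that order acts on the at most three cosets of a Sylow `2`-subgroup with a
`2`-group as kernel, and the image, of order dividing `6`, is solvable by the same argument
applied to a Sylow `3`-subgroup.
-/

theorem exists_one_add_pow_eq {R : Type*} [Ring R] (x : R) (m : ℕ) :
    ∃ g : R, (1 + x) ^ m = 1 + (m : ℤ) • x + (m.choose 2 : ℤ) • x ^ 2 + x ^ 3 * g := by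
  open Polynomial in
  have key : ∃ g : ℤ[X],
      (1 + X) ^ m = 1 + C (m : ℤ) * X + C (m.choose 2 : ℤ) * X ^ 2 + X ^ 3 * g := by
    induction m with
    | zero => exact ⟨0, by simp⟩
    | succ m ih =>
      obtain ⟨g, hg⟩ := ih
      refine ⟨g * (1 + X) + C (m.choose 2 : ℤ), ?_⟩
      rw [pow_succ, hg, Nat.choose_succ_succ, Nat.choose_one_right]
      push_cast
      simp only [C_add, C_1]
      ring
  obtain ⟨g, hg⟩ := key
  refine ⟨aeval x g, ?_⟩
  simpa [Algebra.smul_def] using congrArg (aeval x) hg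

theorem MonoidHom.injective_of_forall_orderOf_prime {G H : Type*} [Group G] [Finite G] [Group H]
    (f : G →* H) (h : ∀ x : G, (orderOf x).Prime → f x = 1 → x = 1) : Function.Injective f := by
  refine (injective_iff_map_eq_one f).mpr fun x hx => ?_
  by_contra hx1
  have hord : orderOf x ≠ 1 := mt orderOf_eq_one_iff.mp hx1
  have hq := Nat.minFac_prime hord
  have hy := orderOf_pow_orderOf_div (orderOf_pos x).ne' (Nat.minFac_dvd (orderOf x))
  have := h _ (hy ▸ hq) (by rw [map_pow, hx, one_pow])
  exact hq.ne_one (by rw [← hy, this, orderOf_one])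

namespace Matrix

variable {m n : Type*}

theorem exists_eq_smul_of_forall_dvd {d : ℤ} {M : Matrix m n ℤ} (h : ∀ i j, d ∣ M i j) :
    ∃ C, M = d • C :=
  ⟨M.map (· / d), ext fun i j => (Int.mul_ediv_cancel' (h i j)).symm⟩

theorem exists_eq_smul_of_smul_eq_smul {p q : ℤ} (hpq : IsCoprime p q) {B C : Matrix m n ℤ}
    (h : q • B = p • C) : ∃ B', B = p • B' :=
  exists_eq_smul_of_forall_dvd fun i j =>
    hpq.dvd_of_dvd_mul_left ⟨C i j, by simpa using congrFun (congrFun h i) j⟩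

theorem eq_zero_of_forall_exists_eq_pow_smul {p : ℤ} (hp : p.natAbs ≠ 1) {M : Matrix m n ℤ}
    (h : ∀ k : ℕ, ∃ C, M = p ^ k • C) : M = 0 := by
  ext i j
  by_contra hM
  obtain ⟨k, hk⟩ := Int.finiteMultiplicity_iff.mpr ⟨hp, hM⟩
  obtain ⟨C, hC⟩ := h (k + 1)
  exact hk ⟨C i j, by simp [hC]⟩

variable [Fintype n] [DecidableEq n]

theorem exists_eq_smul_of_one_add_pow_smul_pow_eq_one {p q : ℕ} (hp : p.Prime) (hq : q.Prime)
    (hpq : p ≠ 2 ∨ q ≠ 2) {i : ℕ} {B : Matrix n n ℤ} (h : (1 + (p : ℤ) ^ (i + 1) • B) ^ q = 1) :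
    ∃ B', B = (p : ℤ) • B' := by
  obtain ⟨g, hg⟩ := exists_one_add_pow_eq ((p : ℤ) ^ (i + 1) • B) q
  set Z := (q.choose 2 : ℤ) • B ^ 2 + (p : ℤ) ^ (i + 1) • (B ^ 3 * g)
  have hp0 : (p : ℤ) ≠ 0 := by exact_mod_cast hp.ne_zero
  have hqB : (q : ℤ) • B = (p : ℤ) • -((p : ℤ) ^ i • Z) := by
    have h0 : (p : ℤ) ^ (i + 1) • ((q : ℤ) • B + (p : ℤ) ^ (i + 1) • Z) = 0 := by
      rw [h, add_assoc, add_assoc, left_eq_add] at hg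
      rw [← hg]
      simp only [Z, smul_pow, smul_mul_assoc]
      module
    rw [smul_eq_zero_iff_right (pow_ne_zero _ hp0), add_eq_zero_iff_eq_neg] at h0
    rw [h0]
    module
  rcases eq_or_ne q p with rfl | hqp
  · -- `q` is odd, so `q ∣ q.choose 2` supplies the missing factor `q`
    have hq2 : q ≠ 2 := hpq.elim id id
    obtain ⟨c, hc⟩ : q ∣ q.choose 2 :=
      hq.dvd_choose_self two_ne_zero (lt_of_le_of_ne hq.two_le hq2.symm)
    refine ⟨-((q : ℤ) ^ i • ((c : ℤ) • B ^ 2 + (q : ℤ) ^ i • (B ^ 3 * g))),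
      smul_right_injective _ hp0 ?_⟩
    simp only [hqB, Z, hc]
    push_cast
    module
  · exact exists_eq_smul_of_smul_eq_smul
      (Nat.isCoprime_iff_coprime.mpr ((Nat.coprime_primes hp hq).mpr hqp.symm)) hqB

theorem eq_one_of_pow_eq_one_of_eq_one_add_smul {p q : ℕ} (hp : p.Prime) (hq : q.Prime)
    (hpq : p ≠ 2 ∨ q ≠ 2) {A : Matrix n n ℤ} (hA : ∃ B, A = 1 + (p : ℤ) • B) (hAq : A ^ q = 1) :
    A = 1 := by
  have hpow : ∀ k : ℕ, ∃ B, A = 1 + (p : ℤ) ^ (k + 1) • B := by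
    intro k
    induction k with
    | zero => simpa using hA
    | succ k ih =>
      obtain ⟨B, rfl⟩ := ih
      obtain ⟨B', rfl⟩ := exists_eq_smul_of_one_add_pow_smul_pow_eq_one hp hq hpq hAq
      exact ⟨B', by rw [smul_smul, ← pow_succ]⟩
  rw [← sub_eq_zero]
  refine eq_zero_of_forall_exists_eq_pow_smul (p := p) (by simpa using hp.ne_one) fun k => ?_
  obtain ⟨B, hB⟩ := hpow k
  exact ⟨(p : ℤ) • B, by rw [hB, add_sub_cancel_left, smul_smul, ← pow_succ]⟩

namespace GeneralLinearGroup

theorem exists_eq_one_add_smul_of_map_eq_one {p : ℕ} {x : GL n ℤ}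
    (hx : map (Int.castRingHom (ZMod p)) x = 1) : ∃ B, (x : Matrix n n ℤ) = 1 + (p : ℤ) • B := by
  obtain ⟨B, hB⟩ := exists_eq_smul_of_forall_dvd (M := (x : Matrix n n ℤ) - 1) fun i j => by
    rw [← ZMod.intCast_zmod_eq_zero_iff_dvd]
    have hval : (Int.castRingHom (ZMod p)).mapMatrix ((x : Matrix n n ℤ) - 1) = 0 := by
      rw [map_sub, _root_.map_one, sub_eq_zero]
      simpa using congrArg Units.val hx
    simpa using congrFun (congrFun hval i) j
  exact ⟨B, eq_add_of_sub_eq' hB⟩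

theorem eq_one_of_map_zmod_eq_one {p q : ℕ} (hp : p.Prime) (hq : q.Prime) (hpq : p ≠ 2 ∨ q ≠ 2)
    {x : GL n ℤ} (hx : map (Int.castRingHom (ZMod p)) x = 1) (hxq : x ^ q = 1) : x = 1 :=
  Units.ext <| eq_one_of_pow_eq_one_of_eq_one_add_smul hp hq hpq
    (exists_eq_one_add_smul_of_map_eq_one hx) (by simpa using congrArg Units.val hxq)

theorem card_dvd_card_zmod {K : Type*} [Group K] [Finite K] {f : K →* GL n ℤ}
    (hf : Function.Injective f) {p : ℕ} (hp : p.Prime) (hK : p ≠ 2 ∨ Odd (Nat.card K)) :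
    Nat.card K ∣ Nat.card (GL n (ZMod p)) := by
  refine Subgroup.card_dvd_of_injective ((map (Int.castRingHom (ZMod p))).comp f) ?_
  refine MonoidHom.injective_of_forall_orderOf_prime _ fun x hq hx => hf ?_
  refine (eq_one_of_map_zmod_eq_one hp hq ?_ hx ?_).trans f.map_one.symm
  · refine hK.imp_right fun hodd hq2 => ?_
    exact Nat.not_even_iff_odd.mpr hodd (even_iff_two_dvd.mpr (hq2 ▸ orderOf_dvd_natCard x))
  · rw [← map_pow, pow_orderOf_eq_one, map_one]

end GeneralLinearGroup

end Matrix

namespace Group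

variable {G : Type*} [Group G]

theorem isSolvable_of_isSolvable_perm_quotient (H : Subgroup G)
    [IsSolvable H] [IsSolvable (Equiv.Perm (G ⧸ H))] : IsSolvable G := by
  let φ := MulAction.toPermHom G (G ⧸ H)
  have : IsSolvable φ.ker :=
    isSolvable_of_isSolvable_injective (Subgroup.inclusion_injective
      (Subgroup.normalCore_eq_ker H ▸ Subgroup.normalCore_le H : φ.ker ≤ H))
  exact isSolvable_of_ker_le_range φ.ker.subtype φ (Subgroup.range_subtype _).ge

theorem _root_.Sylow.isSolvable_of_isSolvable_perm [Finite G] {p : ℕ} [Fact p.Prime]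
    (P : Sylow p G) [IsSolvable (Equiv.Perm (G ⧸ (P : Subgroup G)))] :
    IsSolvable G :=
  have := P.isPGroup'.isNilpotent
  isSolvable_of_isSolvable_perm_quotient P

theorem isSolvable_of_card_dvd_6 [Finite G] (h : Nat.card G ∣ 6) : IsSolvable G := by
  have : Fact (Nat.Prime 3) := ⟨Nat.prime_three⟩
  obtain ⟨P⟩ : Nonempty (Sylow 3 G) := inferInstance
  have hidx : (P : Subgroup G).index ∣ 2 :=
    (Nat.prime_three.coprime_iff_not_dvd.mpr P.not_dvd_index).symm.dvd_of_dvd_mul_right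
      (P.index_dvd_card.trans h : _ ∣ 2 * 3)
  have : IsPGroup 2 (Equiv.Perm (G ⧸ (P : Subgroup G))) := by
    refine IsPGroup.of_card_dvd_pow (n := 1) ?_
    rw [Nat.card_perm, ← Subgroup.index]
    exact Nat.factorial_dvd_factorial (Nat.le_of_dvd two_pos hidx)
  have := this.isNilpotent
  exact P.isSolvable_of_isSolvable_perm

theorem isSolvable_of_card_dvd_96 [Finite G] (h : Nat.card G ∣ 96) : IsSolvable G := by
  have : Fact (Nat.Prime 2) := ⟨Nat.prime_two⟩
  obtain ⟨P⟩ : Nonempty (Sylow 2 G) := inferInstance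
  have hidx : (P : Subgroup G).index ∣ 3 :=
    ((Nat.prime_two.coprime_iff_not_dvd.mpr P.not_dvd_index).symm.pow_right 5
      ).dvd_of_dvd_mul_right (P.index_dvd_card.trans h : _ ∣ 3 * 2 ^ 5)
  have : IsSolvable (Equiv.Perm (G ⧸ (P : Subgroup G))) := by
    refine isSolvable_of_card_dvd_6 ?_
    rw [Nat.card_perm, ← Subgroup.index]
    exact Nat.factorial_dvd_factorial (Nat.le_of_dvd three_pos hidx)
  exact P.isSolvable_of_isSolvable_perm

end Group

theorem Nat.dvd_96_of_dvd_11232 {n : ℕ} (hn : n ≠ 0) (h : n ∣ 11232)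
    (hodd : ∀ r : ℕ, r.Prime → r ≠ 2 → ordProj[r] n ∣ 168) : n ∣ 96 := by
  refine (Nat.factorization_prime_le_iff_dvd hn (by norm_num)).mp fun r hr => ?_
  rw [← hr.pow_dvd_iff_le_factorization (by norm_num)]
  have h11232 : ordProj[r] n ∣ 11232 := (Nat.ordProj_dvd n r).trans h
  rcases eq_or_ne r 2 with rfl | hr2
  · exact ((Nat.Coprime.pow_left _ (by norm_num : Nat.Coprime 2 351)).dvd_of_dvd_mul_left
      (n := 32) h11232).trans (by norm_num)
  · exact (Nat.dvd_gcd h11232 (hodd r hr hr2)).trans (by norm_num)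

theorem finite_subgroup_GL3Z_solvable
    (H : Subgroup (GL (Fin 3) ℤ)) (hH : Finite H) :
    IsSolvable H := by
  have : Fact (Nat.Prime 2) := ⟨Nat.prime_two⟩
  have : Fact (Nat.Prime 3) := ⟨Nat.prime_three⟩
  have card_GL_zmod_two : Nat.card (GL (Fin 3) (ZMod 2)) = 168 := by
    rw [Matrix.card_GL_field, ZMod.card, Fin.prod_univ_three]; rfl
  have card_GL_zmod_three : Nat.card (GL (Fin 3) (ZMod 3)) = 11232 := by
    rw [Matrix.card_GL_field, ZMod.card, Fin.prod_univ_three]; rfl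
  have hmod3 : Nat.card H ∣ 11232 := card_GL_zmod_three ▸
    Matrix.GeneralLinearGroup.card_dvd_card_zmod H.subtype_injective Nat.prime_three
      (Or.inl (by norm_num))
  have hsylow (r : ℕ) (hr : r.Prime) (hr2 : r ≠ 2) : ordProj[r] (Nat.card H) ∣ 168 := by
    have : Fact r.Prime := ⟨hr⟩
    obtain ⟨Q⟩ : Nonempty (Sylow r H) := inferInstance
    have hQ : Nat.card Q = ordProj[r] (Nat.card H) := Q.card_eq_multiplicity
    rw [← hQ, ← card_GL_zmod_two]
    refine Matrix.GeneralLinearGroup.card_dvd_card_zmod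
      (f := H.subtype.comp (Q : Subgroup H).subtype)
      (H.subtype_injective.comp (Q : Subgroup H).subtype_injective) Nat.prime_two (Or.inr ?_)
    exact hQ ▸ (hr.odd_of_ne_two hr2).pow
  exact Group.isSolvable_of_card_dvd_96 (Nat.dvd_96_of_dvd_11232 Nat.card_pos.ne' hmod3 hsylow)
end

section
/- The group SL(2,5) is minimal non-solvable: it is not solvable, but every proper subgroup of SL(2,5) is solvable. -/
/-!
`SL(2, F)` is perfect as soon as `F` has an element `a ≠ 0` with `a ^ 2 ≠ 1`
(`SL2.commutator_eq_top`); for `F = ZMod 5` take `a = 2`. A nontrivial perfect group is not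
solvable, and it has no subgroup of index 2, so a proper subgroup of `SL(2, 5)` has order dividing
120 and at most 40. All groups of such orders are solvable: orders dividing 30 are squarefree
(Z-groups); groups of order 4, 8, 20, 40 have a normal Sylow 5-subgroup (none of 2, 4, 8 is
`≡ 1 [MOD 5]`) with a 2-group quotient; and in orders 12, 24 a Sylow 2-subgroup has index 3, so
the action on its cosets has a 2-group kernel and an image inside `S₃`.
-/

section

variable {G : Type*} [Group G]

theorem Subgroup.commutator_le_of_index_eq_two {H : Subgroup G} (hH : H.index = 2) :
    _root_.commutator G ≤ H := by
  have := normal_of_index_eq_two hH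
  have : IsCyclic (G ⧸ H) := isCyclic_of_prime_card (p := 2) hH
  rw [← Normal.quotient_commutative_iff_commutator_le]
  infer_instance

theorem Group.IsPerfect.three_le_index [Finite G] [IsPerfect G] {H : Subgroup G} (hH : H ≠ ⊤) :
    3 ≤ H.index := by
  have h0 : H.index ≠ 0 := Subgroup.index_ne_zero_of_finite
  have h1 : 1 < H.index := Subgroup.one_lt_index_of_ne_top hH
  have h2 : H.index ≠ 2 := fun h2 => hH <| top_le_iff.mp <|
    IsPerfect.commutator_eq_top (G := G) ▸ H.commutator_le_of_index_eq_two h2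
  omega

namespace Sylow

variable [Finite G] {p : ℕ} [Fact p.Prime] (P : Sylow p G)

theorem card_eq_pow_of_card_eq_pow_mul {a m : ℕ} (hG : Nat.card G = p ^ a * m) (hm : ¬ p ∣ m) :
    Nat.card P = p ^ a := by
  have hp : p.Prime := Fact.out
  have hm0 : m ≠ 0 := by rintro rfl; exact hm (dvd_zero p)
  rw [P.card_eq_multiplicity, hG, Nat.factorization_mul (pow_ne_zero a hp.ne_zero) hm0]
  simp [hp.factorization_pow, Nat.factorization_eq_zero_of_not_dvd hm]

theorem index_eq_of_card_eq_pow_mul {a m : ℕ} (hG : Nat.card G = p ^ a * m) (hm : ¬ p ∣ m) :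
    P.index = m := by
  have h := (P : Subgroup G).card_mul_index
  rw [P.card_eq_pow_of_card_eq_pow_mul hG hm, hG] at h
  exact Nat.eq_of_mul_eq_mul_left (pow_pos (Fact.out : p.Prime).pos a) h

theorem normal_of_forall_dvd_index (h : ∀ d, d ∣ P.index → d ≡ 1 [MOD p] → d = 1) :
    (P : Subgroup G).Normal := by
  have : Subsingleton (Sylow p G) := (Nat.card_eq_one_iff_unique.mp
    (h _ P.card_dvd_index (card_sylow_modEq_one p G))).1
  exact normal_of_subsingleton P

end Sylow

theorem Nat.squarefree_thirty : Squarefree 30 := by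
  rw [Nat.squarefree_iff_nodup_primeFactorsList (by norm_num)]
  simp [Nat.primeFactorsList_ofNat]

theorem Equiv.Perm.isSolvable_of_card_le_three {α : Type*} [Finite α] (hα : Nat.card α ≤ 3) :
    Group.IsSolvable (Equiv.Perm α) := by
  have h6 : Squarefree (Nat.card (Equiv.Perm α)) := by
    refine Nat.squarefree_thirty.squarefree_of_dvd (dvd_trans ?_ (by norm_num : 6 ∣ 30))
    rw [Nat.card_perm]
    exact Nat.factorial_dvd_factorial hα
  have := IsZGroup.of_squarefree h6
  infer_instance

namespace Group

theorem isSolvable_of_card_eq_prime_pow [Finite G] {p n : ℕ} [Fact p.Prime]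
    (hG : Nat.card G = p ^ n) : IsSolvable G :=
  have := (IsPGroup.of_card hG).isNilpotent
  inferInstance

theorem isSolvable_of_card_eq_pow_mul_pow [Finite G] {p q a b : ℕ} (hp : p.Prime) (hq : q.Prime)
    (hpq : p ≠ q) (hG : Nat.card G = p ^ a * q ^ b)
    (hqp : ∀ j ∈ Finset.Icc 1 b, ¬ q ^ j ≡ 1 [MOD p]) : IsSolvable G := by
  have := Fact.mk hp
  have := Fact.mk hq
  let P : Sylow p G := default
  have hpqb : ¬ p ∣ q ^ b := fun h =>
    hpq ((Nat.prime_dvd_prime_iff_eq hp hq).mp (hp.dvd_of_dvd_pow h))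
  have hidx : P.index = q ^ b := P.index_eq_of_card_eq_pow_mul hG hpqb
  have : (P : Subgroup G).Normal := P.normal_of_forall_dvd_index fun d hd hmod => by
    obtain ⟨j, hjb, rfl⟩ := (Nat.dvd_prime_pow hq).mp (hidx ▸ hd)
    by_contra hj
    exact hqp j (Finset.mem_Icc.mpr ⟨Nat.pos_of_ne_zero (by rintro rfl; simp at hj), hjb⟩) hmod
  rw [isSolvable_iff_subgroup_quotient (P : Subgroup G)]
  exact ⟨isSolvable_of_card_eq_prime_pow (P.card_eq_pow_of_card_eq_pow_mul hG hpqb),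
    isSolvable_of_card_eq_prime_pow (n := b) (by rw [← Subgroup.index_eq_card, hidx])⟩

-- `G` acts on `G ⧸ H` with kernel the normal core of `H`.
theorem isSolvable_of_index_le_three (H : Subgroup G) [IsSolvable H] [H.FiniteIndex]
    (hH : H.index ≤ 3) : IsSolvable G := by
  have : IsSolvable H.normalCore :=
    isSolvable_of_isSolvable_injective (Subgroup.inclusion_injective H.normalCore_le)
  have := Equiv.Perm.isSolvable_of_card_le_three (α := G ⧸ H) hH
  exact isSolvable_of_ker_le_range H.normalCore.subtype (MulAction.toPermHom G (G ⧸ H))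
    (by rw [Subgroup.range_subtype, Subgroup.normalCore_eq_ker])

theorem isSolvable_of_card_eq_two_pow_mul_three [Finite G] {k : ℕ}
    (hG : Nat.card G = 2 ^ k * 3) : IsSolvable G := by
  let P : Sylow 2 G := default
  have : IsSolvable P :=
    isSolvable_of_card_eq_prime_pow (P.card_eq_pow_of_card_eq_pow_mul hG (by decide))
  exact isSolvable_of_index_le_three (P : Subgroup G)
    (P.index_eq_of_card_eq_pow_mul hG (by decide)).le

theorem isSolvable_of_card_dvd_120_of_lt_60 [Finite G] (hdvd : Nat.card G ∣ 120)
    (hlt : Nat.card G < 60) : IsSolvable G := by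
  have orders : ∀ n < 60, n ∣ 120 → n ∣ 30 ∨ n = 5 ^ 0 * 2 ^ 2 ∨ n = 5 ^ 0 * 2 ^ 3 ∨
      n = 5 ^ 1 * 2 ^ 2 ∨ n = 5 ^ 1 * 2 ^ 3 ∨ n = 2 ^ 2 * 3 ∨ n = 2 ^ 3 * 3 := by
    decide
  rcases orders _ hlt hdvd with h | h | h | h | h | h | h
  · have := IsZGroup.of_squarefree (Nat.squarefree_thirty.squarefree_of_dvd h)
    infer_instance
  any_goals
    exact isSolvable_of_card_eq_pow_mul_pow Nat.prime_five Nat.prime_two (by decide) h (by decide)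
  all_goals exact isSolvable_of_card_eq_two_pow_mul_three h

end Group

end

open Matrix MatrixGroups

set_option maxRecDepth 10000 in
theorem Matrix.SpecialLinearGroup.card_SL2_ZMod_five : Nat.card SL(2, ZMod 5) = 120 := by
  rw [Nat.card_eq_fintype_card]
  decide

instance Nat.fact_prime_five : Fact (Nat.Prime 5) :=
  ⟨Nat.prime_five⟩

instance Matrix.SpecialLinearGroup.isPerfect_SL2_ZMod_five : Group.IsPerfect SL(2, ZMod 5) :=
  ⟨SL2.commutator_eq_top (a := (2 : ZMod 5)) (by decide) (by decide)⟩

theorem SL2_5_mns :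
    ¬ IsSolvable (Matrix.SpecialLinearGroup (Fin 2) (ZMod 5)) ∧
    ∀ H : Subgroup (Matrix.SpecialLinearGroup (Fin 2) (ZMod 5)), H ≠ ⊤ →
      IsSolvable H := by
  have hcard := SpecialLinearGroup.card_SL2_ZMod_five
  have : Nontrivial SL(2, ZMod 5) := Finite.one_lt_card_iff_nontrivial.mp (by rw [hcard]; norm_num)
  refine ⟨Group.IsPerfect.not_isSolvable _, fun H hH => ?_⟩
  have hmul := H.card_mul_index
  rw [hcard] at hmul
  have hindex := Group.IsPerfect.three_le_index hH
  exact Group.isSolvable_of_card_dvd_120_of_lt_60 (Dvd.intro _ hmul) (by nlinarith)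
end
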